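/- arXiv:2010.14775 — 5 statements merged into one kernel-verified Lean document; each statement's English description precedes it below -/
import Mathlib

section
/- Let k be a field, p ∈ k[x] irreducible, e ≥ 1, and R = k[x]/⟨p^e⟩. Let f ∈ R[y] be a polynomial, f = c_0 + c_1 y + ⋯ + c_δ y^δ, such that some coefficient of f is not in the ideal ⟨p⟩ of R. Let n be the largest index with c_n ∉ ⟨p⟩. Then there exist q, u ∈ R[y] with f = q·u, where q is monic of degree n in y, and u = u_0 + u_1 y + ⋯ + u_{δ−n} y^{δ−n} with u_0 ∉ ⟨p⟩ and u_i ∈ ⟨p⟩ for all i ≥ 1. In particular u is a unit of R[y] and the ideals ⟨f, p^e⟩ and ⟨q, p^e⟩ of k[x][y] coincide. -/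
open Polynomial


/-- Coefficients of `g` all lie in `I` iff `g` maps to `0` in `(R ⧸ I)[X]`. -/
lemma wf_coeffs_mem_iff_map_eq_zero {R : Type*} [CommRing R] (I : Ideal R) (g : R[X]) :
    (∀ i, g.coeff i ∈ I) ↔ g.map (Ideal.Quotient.mk I) = 0 := by
  simp [Polynomial.ext_iff, coeff_map, Ideal.Quotient.eq_zero_iff_mem]

/-- Structure of the quotient `f /ₘ q` modulo `M`. -/
lemma wf_div_coeffs {R : Type*} [CommRing R] (M : Ideal R) (f q : R[X]) (n : ℕ)
    (hq : q.Monic) (hqd : q.natDegree = n)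
    (hn : f.coeff n ∉ M) (hmax : ∀ m, n < m → f.coeff m ∈ M)
    (hr : ∀ i, (f %ₘ q).coeff i ∈ M) :
    (f /ₘ q).coeff 0 ∉ M ∧ ∀ i, 1 ≤ i → (f /ₘ q).coeff i ∈ M := by
  have hMne : M ≠ ⊤ := fun h => hn (h ▸ Submodule.mem_top)
  haveI : Nontrivial (R ⧸ M) := Ideal.Quotient.nontrivial_iff.mpr hMne
  set ψ := Ideal.Quotient.mk M with hψ
  have hfeq : f %ₘ q + q * (f /ₘ q) = f := modByMonic_add_div f q
  have hrmap : (f %ₘ q).map ψ = 0 := (wf_coeffs_mem_iff_map_eq_zero M _).mp hr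
  have hfactor : f.map ψ = q.map ψ * (f /ₘ q).map ψ := by
    have := congrArg (Polynomial.map ψ) hfeq
    rw [Polynomial.map_add, Polynomial.map_mul, hrmap, zero_add] at this
    exact this.symm
  have hfn : (f.map ψ).coeff n ≠ 0 := by
    rw [coeff_map]
    exact fun h => hn (Ideal.Quotient.eq_zero_iff_mem.mp h)
  have hune : (f /ₘ q).map ψ ≠ 0 := by
    intro h
    rw [h, mul_zero] at hfactor
    exact hfn (by rw [hfactor, coeff_zero])
  have hfdeg : (f.map ψ).natDegree ≤ n := by
    rw [natDegree_le_iff_coeff_eq_zero]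
    intro N hN
    rw [coeff_map, Ideal.Quotient.eq_zero_iff_mem]
    exact hmax N hN
  have hqdeg : (q.map ψ).natDegree = n := by rw [hq.natDegree_map ψ, hqd]
  have hmul : (f.map ψ).natDegree = n + ((f /ₘ q).map ψ).natDegree := by
    rw [hfactor, (hq.map ψ).natDegree_mul' hune, hqdeg]
  have hud : ((f /ₘ q).map ψ).natDegree = 0 := by omega
  have hC : (f /ₘ q).map ψ = C (((f /ₘ q).map ψ).coeff 0) :=
    eq_C_of_natDegree_eq_zero hud
  constructor
  · intro h0
    apply hune
    rw [hC, coeff_map, hψ, Ideal.Quotient.eq_zero_iff_mem.mpr h0, map_zero]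
  · intro i hi
    rw [← Ideal.Quotient.eq_zero_iff_mem, ← coeff_map]
    rw [hC, coeff_C, if_neg (by omega)]

lemma wf_coeffs_mem_iff_map_eq_zero' {R : Type*} [CommRing R] (I : Ideal R) (g : R[X]) :
    (∀ i, g.coeff i ∈ I) ↔ g.map (Ideal.Quotient.mk I) = 0 := by
  simp [Polynomial.ext_iff, coeff_map, Ideal.Quotient.eq_zero_iff_mem]

/-- If `f ≡ q·(f /ₘ q) mod M^(j+1)-coeff-wise` with coeffs of remainder in an ideal `J`,
then remainder coeffs stay in `J` after replacing `q` by `q'` when `f - q' * u` has coeffs in `J`. -/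
lemma wf_step {R : Type*} [CommRing R] [Nontrivial R] (M : Ideal R)
    (hM : ∀ x : R, x ∉ M → IsUnit x)
    (f : R[X]) (n : ℕ)
    (hn : f.coeff n ∉ M) (hmax : ∀ m, n < m → f.coeff m ∈ M)
    (j : ℕ) (hj : 1 ≤ j)
    (q : R[X]) (hq : q.Monic) (hqd : q.natDegree = n)
    (hr : ∀ i, (f %ₘ q).coeff i ∈ M ^ j) :
    ∃ q' : R[X], q'.Monic ∧ q'.natDegree = n ∧
      ∀ i, (f %ₘ q').coeff i ∈ M ^ (j + 1) := by
  set r := f %ₘ q with hrdef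
  set u := f /ₘ q with hudef
  have hrM : ∀ i, r.coeff i ∈ M := fun i => Ideal.pow_le_self (by omega) (hr i)
  obtain ⟨h0, h1⟩ := wf_div_coeffs M f q n hq hqd hn hmax hrM
  obtain ⟨v, hv⟩ := (hM _ h0).exists_left_inv
  set s := C v * r with hsdef
  have hsdeg : s.degree < q.degree := by
    calc s.degree ≤ (C v).degree + r.degree := degree_mul_le _ _
    _ ≤ 0 + r.degree := add_le_add_left degree_C_le _
    _ = r.degree := zero_add _
    _ < q.degree := degree_modByMonic_lt f hq
  refine ⟨q + s, hq.add_of_left hsdeg, ?_, ?_⟩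
  · rw [← hqd]
    exact natDegree_eq_of_degree_eq (degree_add_eq_left_of_degree_lt hsdeg)
  · set q' := q + s with hq'def
    have hq' : q'.Monic := hq.add_of_left hsdeg
    -- w := 1 - C v * u has all coefficients in M
    set w := 1 - C v * u with hwdef
    have hw : ∀ i, w.coeff i ∈ M := by
      intro i
      rcases Nat.eq_zero_or_pos i with h | h
      · subst h
        have : w.coeff 0 = 1 - v * u.coeff 0 := by
          simp [hwdef, coeff_sub, coeff_one, coeff_C_mul]
        rw [this, hv, sub_self]
        exact M.zero_mem
      · have hi0 : i ≠ 0 := by omega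
        have : w.coeff i = -(v * u.coeff i) := by
          simp [hwdef, coeff_sub, coeff_one, hi0, coeff_C_mul]
        rw [this]
        exact M.neg_mem (M.mul_mem_left v (h1 i h))
    -- f - q' * u = r * w, with coefficients in M^(j+1)
    have hkey : f - q' * u = r * w := by
      have hfeq : r + q * u = f := modByMonic_add_div f q
      rw [hq'def, hsdef, hwdef]
      ring_nf
      rw [← hfeq]
      ring
    have hcoeff : ∀ i, (f - q' * u).coeff i ∈ M ^ (j + 1) := by
      intro i
      rw [hkey, coeff_mul]
      refine Ideal.sum_mem _ fun x _ => ?_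
      rw [pow_succ]
      exact Ideal.mul_mem_mul (hr x.1) (hw x.2)
    -- now pass to R ⧸ M^(j+1)
    rw [wf_coeffs_mem_iff_map_eq_zero' (M ^ (j + 1))]
    set ψ := Ideal.Quotient.mk (M ^ (j + 1)) with hψ
    have hzero : (f - q' * u).map ψ = 0 :=
      (wf_coeffs_mem_iff_map_eq_zero' _ _).mp hcoeff
    have hfac : f.map ψ = q'.map ψ * u.map ψ := by
      have : f.map ψ - (q' * u).map ψ = 0 := by
        rw [← Polynomial.map_sub, hzero]
      rw [Polynomial.map_mul] at this
      linear_combination (norm := ring_nf) this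
    rw [Polynomial.map_modByMonic ψ hq']
    exact (modByMonic_eq_zero_iff_dvd (hq'.map ψ)).mpr ⟨u.map ψ, hfac⟩
lemma wf_base {R : Type*} [CommRing R] [Nontrivial R] (M : Ideal R)
    (hM : ∀ x : R, x ∉ M → IsUnit x)
    (f : R[X]) (n : ℕ)
    (hn : f.coeff n ∉ M) (hmax : ∀ m, n < m → f.coeff m ∈ M) :
    ∃ q : R[X], q.Monic ∧ q.natDegree = n ∧ ∀ i, (f %ₘ q).coeff i ∈ M := by
  obtain ⟨v, hv⟩ := (hM _ hn).exists_left_inv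
  set s := C v * (f %ₘ X ^ n) with hsdef
  have hXmon : (X ^ n : R[X]).Monic := monic_X_pow n
  have hsdeg : s.degree < (n : WithBot ℕ) := by
    calc s.degree ≤ (C v).degree + (f %ₘ X ^ n).degree := degree_mul_le _ _
    _ ≤ 0 + (f %ₘ X ^ n).degree := add_le_add_left degree_C_le _
    _ = (f %ₘ X ^ n).degree := zero_add _
    _ < (X ^ n : R[X]).degree := degree_modByMonic_lt f hXmon
    _ = (n : WithBot ℕ) := degree_X_pow n
  have hsdeg' : s.degree < (X ^ n : R[X]).degree := by rw [degree_X_pow]; exact hsdeg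
  set q := X ^ n + s with hqdef
  have hqmon : q.Monic := monic_X_pow_add hsdeg
  have hqdeg : q.natDegree = n := by
    have := natDegree_eq_of_degree_eq (degree_add_eq_left_of_degree_lt hsdeg')
    rw [hqdef, this, natDegree_X_pow]
  refine ⟨q, hqmon, hqdeg, ?_⟩
  rw [wf_coeffs_mem_iff_map_eq_zero M]
  set ψ := Ideal.Quotient.mk M with hψ
  have hMne : M ≠ ⊤ := fun h => hn (h ▸ Submodule.mem_top)
  haveI : Nontrivial (R ⧸ M) := Ideal.Quotient.nontrivial_iff.mpr hMne
  set g := f.map ψ with hgdef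
  -- g /ₘ X^n is the constant ψ (f.coeff n)
  have hgdeg : g.natDegree ≤ n := by
    rw [natDegree_le_iff_coeff_eq_zero]
    intro N hN
    rw [hgdef, coeff_map, Ideal.Quotient.eq_zero_iff_mem]
    exact hmax N hN
  have hXmon' : (X ^ n : (R ⧸ M)[X]).Monic := monic_X_pow n
  have hdivdeg : (g /ₘ X ^ n).natDegree = 0 := by
    rw [natDegree_divByMonic g hXmon', natDegree_X_pow]
    omega
  have hdivC : g /ₘ X ^ n = C ((g /ₘ X ^ n).coeff 0) := eq_C_of_natDegree_eq_zero hdivdeg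
  have hgsplit : g %ₘ X ^ n + X ^ n * (g /ₘ X ^ n) = g := modByMonic_add_div g (X ^ n)
  have hmodn : (g %ₘ X ^ n).coeff n = 0 := by
    apply coeff_eq_zero_of_degree_lt
    calc (g %ₘ X ^ n).degree < (X ^ n : (R ⧸ M)[X]).degree := degree_modByMonic_lt g hXmon'
    _ = (n : WithBot ℕ) := degree_X_pow n
  have hd : (g /ₘ X ^ n).coeff 0 = ψ (f.coeff n) := by
    have := congrArg (fun h => Polynomial.coeff h n) hgsplit
    simp only [coeff_add, hmodn, zero_add] at this
    rw [hdivC] at this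
    rw [mul_comm, C_mul_X_pow_eq_monomial, coeff_monomial, if_pos rfl] at this
    rw [this, hgdef, coeff_map]
  -- hence g = C (ψ (f.coeff n)) * map of q
  have hgfac : g = C (ψ (f.coeff n)) * q.map ψ := by
    have hqmap : q.map ψ = X ^ n + C (ψ v) * (g %ₘ X ^ n) := by
      rw [hqdef, hsdef, Polynomial.map_add, Polynomial.map_pow, map_X, Polynomial.map_mul,
        map_C, Polynomial.map_modByMonic ψ hXmon, Polynomial.map_pow, map_X, hgdef]
    have hunit : ψ (f.coeff n) * ψ v = 1 := by
      rw [← map_mul, mul_comm, hv, map_one]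
    rw [hqmap, mul_add, ← mul_assoc, ← C_mul, hunit, C_1, one_mul]
    conv_lhs => rw [← hgsplit]
    rw [hdivC, hd]
    ring
  rw [Polynomial.map_modByMonic ψ hqmon, ← hgdef]
  exact (modByMonic_eq_zero_iff_dvd (hqmon.map ψ)).mpr ⟨C (ψ (f.coeff n)), hgfac.trans (mul_comm _ _)⟩
lemma wf_unit {k : Type*} [Field k] (p : Polynomial k) (hp : Irreducible p) (e : ℕ) :
    ∀ x : Polynomial k ⧸ Ideal.span {p ^ e},
      x ∉ Ideal.span {Ideal.Quotient.mk (Ideal.span {p ^ e}) p} → IsUnit x := by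
  intro x hx
  obtain ⟨c, rfl⟩ := Ideal.Quotient.mk_surjective x
  have hpd : ¬ p ∣ c := by
    rintro ⟨d, rfl⟩
    apply hx
    rw [map_mul]
    exact Ideal.mem_span_singleton.mpr ⟨_, rfl⟩
  have hcop : IsCoprime (p ^ e) c := (hp.coprime_iff_not_dvd.mpr hpd).pow_left
  obtain ⟨a, b, hab⟩ := hcop
  have h0 : Ideal.Quotient.mk (Ideal.span {p ^ e}) (p ^ e) = 0 :=
    Ideal.Quotient.eq_zero_iff_mem.mpr (Ideal.mem_span_singleton_self _)
  refine IsUnit.of_mul_eq_one (Ideal.Quotient.mk _ b) ?_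
  have := congrArg (Ideal.Quotient.mk (Ideal.span {p ^ e})) hab
  rw [map_add, map_mul, map_mul, h0, mul_zero, zero_add, map_one] at this
  rw [mul_comm]; exact this

lemma wf_nilp {k : Type*} [Field k] (p : Polynomial k) (e : ℕ)
    (x : Polynomial k ⧸ Ideal.span {p ^ e})
    (hx : x ∈ Ideal.span {Ideal.Quotient.mk (Ideal.span {p ^ e}) p}) : x ^ e = 0 := by
  obtain ⟨d, rfl⟩ := Ideal.mem_span_singleton.mp hx
  have h0 : (Ideal.Quotient.mk (Ideal.span {p ^ e}) p) ^ e = 0 := by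
    rw [← map_pow, Ideal.Quotient.eq_zero_iff_mem]
    exact Ideal.mem_span_singleton_self _
  rw [mul_pow, h0, zero_mul]

lemma wf_ker {k : Type*} [Field k] (p : Polynomial k) (e : ℕ)
    (G : Polynomial (Polynomial k))
    (hG : G.map (Ideal.Quotient.mk (Ideal.span {p ^ e})) = 0) :
    G ∈ Ideal.span {(C (p ^ e) : Polynomial (Polynomial k))} := by
  rw [Ideal.mem_span_singleton, C_dvd_iff_dvd_coeff]
  intro i
  rw [← Ideal.mem_span_singleton]
  have h2 : (Ideal.Quotient.mk (Ideal.span {p ^ e})) (G.coeff i) = 0 := by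
    rw [← Polynomial.coeff_map, hG, Polynomial.coeff_zero]
  exact Ideal.Quotient.eq_zero_iff_mem.mp h2


set_option maxHeartbeats 1000000 in
set_option synthInstance.maxHeartbeats 400000 in
/-- **Weierstrass factorization.** Let `k` be a field, `p ∈ k[x]`
irreducible, `e ≥ 1`, and `R = k[x]/⟨p^e⟩`.  Let `f ∈ R[y]` have some coefficient
outside the maximal ideal `⟨p⟩` of `R`, and let `n` be the largest index with
`coeff f n ∉ ⟨p⟩`.  Then `f = q·u` with `q ∈ R[y]` monic of degree `n`,
`u = u₀ + u₁ y + ⋯ + u_{δ-n} y^{δ-n}` with `u₀ ∉ ⟨p⟩` and `uᵢ ∈ ⟨p⟩` for `i ≥ 1`;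
in particular `u` is a unit of `R[y]`, and for any lifts `F, Q ∈ k[x][y]` of `f, q`
the ideals `⟨F, p^e⟩` and `⟨Q, p^e⟩` of `k[x][y]` coincide. -/
theorem weierstrass_factorization {k : Type*} [Field k]
    (p : Polynomial k) (hp : Irreducible p) (e : ℕ) (he : 1 ≤ e)
    (f : Polynomial (Polynomial k ⧸ Ideal.span {p ^ e})) (n : ℕ)
    (hn : f.coeff n ∉ Ideal.span {Ideal.Quotient.mk (Ideal.span {p ^ e}) p})
    (hmax : ∀ m : ℕ, n < m →
      f.coeff m ∈ Ideal.span {Ideal.Quotient.mk (Ideal.span {p ^ e}) p}) :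
    ∃ q u : Polynomial (Polynomial k ⧸ Ideal.span {p ^ e}),
      f = q * u ∧ q.Monic ∧ q.natDegree = n ∧
      u.natDegree ≤ f.natDegree - n ∧
      u.coeff 0 ∉ Ideal.span {Ideal.Quotient.mk (Ideal.span {p ^ e}) p} ∧
      (∀ i : ℕ, 1 ≤ i →
        u.coeff i ∈ Ideal.span {Ideal.Quotient.mk (Ideal.span {p ^ e}) p}) ∧
      IsUnit u ∧
      (∀ F Q : Polynomial (Polynomial k),
        F.map (Ideal.Quotient.mk (Ideal.span {p ^ e})) = f →
        Q.map (Ideal.Quotient.mk (Ideal.span {p ^ e})) = q →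
        Ideal.span {F, Polynomial.C (p ^ e)} = Ideal.span {Q, Polynomial.C (p ^ e)}) := by
  set ψ := Ideal.Quotient.mk (Ideal.span {p ^ e}) with hψ
  set M : Ideal (Polynomial k ⧸ Ideal.span {p ^ e}) := Ideal.span {ψ p} with hM
  haveI : Nontrivial (Polynomial k ⧸ Ideal.span {p ^ e}) :=
    nontrivial_of_ne (f.coeff n) 0 (fun h => hn (h ▸ M.zero_mem))
  have hMunit := wf_unit p hp e
  -- iterate the Weierstrass step
  have key : ∀ j : ℕ, ∃ q, q.Monic ∧ q.natDegree = n ∧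
      ∀ i, (f %ₘ q).coeff i ∈ M ^ (j + 1) := by
    intro j
    induction j with
    | zero => simpa [pow_one] using wf_base M hMunit f n hn hmax
    | succ j ih =>
      obtain ⟨q, h1, h2, h3⟩ := ih
      exact wf_step M hMunit f n hn hmax (j + 1) (by omega) q h1 h2 h3
  obtain ⟨q, hqm, hqd, hr⟩ := key (e - 1)
  have he' : e - 1 + 1 = e := by omega
  rw [he'] at hr
  have hMe : M ^ e = ⊥ := by
    rw [hM, Ideal.span_singleton_pow, Ideal.span_singleton_eq_bot, ← map_pow,
      Ideal.Quotient.eq_zero_iff_mem]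
    exact Ideal.mem_span_singleton_self _
  have hr0 : f %ₘ q = 0 := by
    ext i
    have := hr i
    rw [hMe, Ideal.mem_bot] at this
    simp only [coeff_zero]
    exact this
  set u := f /ₘ q with hu
  have hfqu : f = q * u := by
    have := modByMonic_add_div f q
    rw [hr0, zero_add] at this
    exact this.symm
  obtain ⟨h0, h1⟩ := wf_div_coeffs M f q n hqm hqd hn hmax
    (fun i => by rw [hr0, coeff_zero]; exact M.zero_mem)
  have hudeg : u.natDegree ≤ f.natDegree - n := by
    rw [hu, natDegree_divByMonic f hqm, hqd]
  have huunit : IsUnit u := by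
    rw [Polynomial.isUnit_iff_coeff_isUnit_isNilpotent]
    refine ⟨hMunit _ h0, fun i hi => ⟨e, wf_nilp p e _ (h1 i (Nat.one_le_iff_ne_zero.mpr hi))⟩⟩
  refine ⟨q, u, hfqu, hqm, hqd, hudeg, h0, h1, huunit, ?_⟩
  intro F Q hF hQ
  have hsub : ∀ A B : Polynomial (Polynomial k),
      ∀ w : Polynomial (Polynomial k ⧸ Ideal.span {p ^ e}),
      A.map ψ = B.map ψ * w →
      Ideal.span {A, (C (p ^ e) : Polynomial (Polynomial k))} ≤
        Ideal.span {B, (C (p ^ e) : Polynomial (Polynomial k))} := by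
    intro A B w h
    obtain ⟨W, hW⟩ := Polynomial.map_surjective ψ Ideal.Quotient.mk_surjective w
    rw [Ideal.span_le]
    intro x hx
    simp only [Set.mem_insert_iff, Set.mem_singleton_iff] at hx
    have hCmem : (C (p ^ e) : Polynomial (Polynomial k)) ∈
        Ideal.span {B, (C (p ^ e) : Polynomial (Polynomial k))} :=
      Ideal.subset_span (by simp)
    rcases hx with rfl | rfl
    · have hker : (x - B * W).map ψ = 0 := by
        rw [Polynomial.map_sub, Polynomial.map_mul, h, hW, sub_self]
      have hmem : x - B * W ∈ Ideal.span {(C (p ^ e) : Polynomial (Polynomial k))} :=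
        wf_ker p e _ hker
      have hx' : x = B * W + (x - B * W) := by ring
      rw [hx']
      refine Ideal.add_mem _ (Ideal.mul_mem_right _ _ (Ideal.subset_span (by simp))) ?_
      exact Ideal.span_mono (Set.singleton_subset_iff.mpr (by simp)) hmem
    · exact hCmem
  have huv : u * ↑huunit.unit⁻¹ = 1 := by
    exact huunit.mul_val_inv
  apply le_antisymm
  · exact hsub F Q u (by rw [hF, hQ, hfqu])
  · refine hsub Q F (↑huunit.unit⁻¹) ?_
    rw [hQ, hF, hfqu, mul_assoc, huv, mul_one]
end

section
/- Let k be a field, a, b ∈ k[x] nonzero. Define sequences a_0 = a, b_0 = b, c_0 = 1 and for i ≥ 0: b_{i+1} = gcd(a_i, b_i), a_{i+1} = a_i / b_{i+1}, c_{i+1} = c_i · b_{i+1}. Then the sequence terminates: there exists s with b_{s+1} = 1, and at termination c_s = a^{(b)} (the b-component of a, i.e., ∏_{p : v_p(b)>0} p^{v_p(a)}), a_s = a / a^{(b)}, and gcd(c_s, a_s) = 1. -/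
open Polynomial UniqueFactorizationMonoid
open scoped Classical

/-- The `b`-component `a^{(b)} = ∏_{p : v_p(b) > 0} p^{v_p(a)}` of a polynomial `a`:
the product of those (normalized, i.e. monic) irreducible factors of `a`, counted
with multiplicity, which divide `b`. -/
noncomputable def bComponent {k : Type*} [Field k] [DecidableEq k]
    (a b : Polynomial k) : Polynomial k :=
  (((normalizedFactors a).filter fun p => p ∣ b).prod)

/-- **correctness of `IsolFactor`.** Let `a, b ∈ k[x]` be nonzero and
define `a₀ = a`, `b₀ = b`, `c₀ = 1` and, for `i ≥ 0`, `b_{i+1} = gcd(aᵢ, bᵢ)`,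
`a_{i+1} = aᵢ / b_{i+1}`, `c_{i+1} = cᵢ · b_{i+1}`.  Then the iteration terminates:
there is `s` with `b_{s+1} = 1`, and then `c_s = a^{(b)}` (the `b`-component of `a`),
`a_s = a / a^{(b)}`, and `gcd(c_s, a_s) = 1`. -/
theorem isolFactor_correct {k : Type*} [Field k] [DecidableEq k]
    (a b : Polynomial k) (ha : a ≠ 0) (hb : b ≠ 0)
    (A B C : ℕ → Polynomial k)
    (hA0 : A 0 = a) (hB0 : B 0 = b) (hC0 : C 0 = 1)
    (hB : ∀ i : ℕ, B (i + 1) = gcd (A i) (B i))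
    (hAi : ∀ i : ℕ, A (i + 1) = A i / B (i + 1))
    (hC : ∀ i : ℕ, C (i + 1) = C i * B (i + 1)) :
    ∃ s : ℕ, B (s + 1) = 1 ∧
      C s = bComponent a b ∧
      A s = a / bComponent a b ∧
      gcd (C s) (A s) = 1 := by
  -- basic invariants
  have hBne : ∀ i, B i ≠ 0 := by
    intro i
    induction i with
    | zero => rw [hB0]; exact hb
    | succ n ih => rw [hB n]; exact gcd_ne_zero_of_right ih
  have hAne : ∀ i, A i ≠ 0 := by
    intro i
    induction i with
    | zero => rw [hA0]; exact ha
    | succ n ih =>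
      rw [hAi n]
      intro h0
      have hd : B (n + 1) ∣ A n := by rw [hB n]; exact gcd_dvd_left _ _
      have := EuclideanDomain.mul_div_cancel' (hBne (n + 1)) hd
      rw [h0, mul_zero] at this
      exact ih this.symm
  have hrec : ∀ i, B (i + 1) * A (i + 1) = A i := by
    intro i
    rw [hAi i]
    exact EuclideanDomain.mul_div_cancel' (hBne (i + 1)) (by rw [hB i]; exact gcd_dvd_left _ _)
  -- A i * C i = a
  have hmul : ∀ i, A i * C i = a := by
    intro i
    induction i with
    | zero => rw [hA0, hC0, mul_one]
    | succ n ih => rw [hC n, ← ih, ← hrec n]; ring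
  -- B i ∣ b
  have hBdvd : ∀ i, B i ∣ b := by
    intro i
    induction i with
    | zero => rw [hB0]
    | succ n ih => exact dvd_trans (by rw [hB n]; exact gcd_dvd_right _ _) ih
  -- primes dividing C i divide b
  have hCp : ∀ i, ∀ p : Polynomial k, Prime p → p ∣ C i → p ∣ b := by
    intro i
    induction i with
    | zero =>
      intro p hp hpd; rw [hC0] at hpd
      exact absurd (isUnit_of_dvd_one hpd) hp.not_unit
    | succ n ih =>
      intro p hp hpd
      rw [hC n] at hpd
      rcases hp.dvd_mul.mp hpd with h | h
      · exact ih p hp h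
      · exact h.trans (hBdvd (n + 1))
  -- primes dividing b and A i divide B i
  have hinv : ∀ i, ∀ p : Polynomial k, Prime p → p ∣ b → p ∣ A i → p ∣ B i := by
    intro i
    induction i with
    | zero => intro p _ hpb _; rw [hB0]; exact hpb
    | succ n ih =>
      intro p hp hpb hpa
      have hpA : p ∣ A n := hpa.trans ⟨B (n + 1), by rw [← hrec n]; ring⟩
      rw [hB n]
      exact dvd_gcd hpA (ih p hp hpb hpA)
  -- C i is monic
  have hCmonic : ∀ i, (C i).Monic := by
    intro i
    induction i with
    | zero => rw [hC0]; exact monic_one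
    | succ n ih =>
      rw [hC n]
      have : (B (n + 1)).Monic := by
        have h := normalize_gcd (A n) (B n)
        rw [← hB n] at h
        rw [← h]
        exact monic_normalize (hBne (n + 1))
      exact ih.mul this
  -- termination: find s with B (s+1) = 1
  have hdeg : ∀ i, B (i + 1) ≠ 1 → (A (i + 1)).natDegree < (A i).natDegree := by
    intro i h1
    have hBn : (B (i + 1)).natDegree ≠ 0 := by
      intro h0
      apply h1
      have hu : IsUnit (B (i + 1)) := by
        rw [Polynomial.isUnit_iff_degree_eq_zero, Polynomial.degree_eq_natDegree (hBne _), h0]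
        rfl
      have := normalize_gcd (A i) (B i)
      rw [← hB i] at this
      rw [← this, normalize_eq_one]
      exact hu
    have := hrec i
    have hd := Polynomial.natDegree_mul (hBne (i + 1)) (hAne (i + 1))
    rw [this] at hd
    omega
  have hterm : ∃ s, B (s + 1) = 1 := by
    by_contra hcon
    push_neg at hcon
    have key : ∀ n, (A n).natDegree + n ≤ (A 0).natDegree := by
      intro n
      induction n with
      | zero => omega
      | succ m ih => have := hdeg m (hcon m); omega
    have := key ((A 0).natDegree + 1)
    omega
  obtain ⟨s, hs⟩ := hterm
  refine ⟨s, hs, ?_⟩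
  -- coprimality of A s with b
  have hcop : ∀ p : Polynomial k, Prime p → p ∣ A s → ¬ p ∣ b := by
    intro p hp hpa hpb
    have : p ∣ B s := hinv s p hp hpb hpa
    have : p ∣ B (s + 1) := by rw [hB s]; exact dvd_gcd hpa this
    rw [hs] at this
    exact hp.not_unit (isUnit_of_dvd_one this)
  have hCne : C s ≠ 0 := (hCmonic s).ne_zero
  -- C s = bComponent a b
  have hkey : C s = bComponent a b := by
    unfold bComponent
    have hfa : normalizedFactors a = normalizedFactors (A s) + normalizedFactors (C s) := by
      rw [← hmul s]; exact normalizedFactors_mul (hAne s) hCne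
    rw [hfa, Multiset.filter_add]
    have h1 : (normalizedFactors (A s)).filter (fun p => p ∣ b) = 0 := by
      rw [Multiset.filter_eq_nil]
      intro p hpmem hpb
      exact hcop p (prime_of_normalized_factor p hpmem)
        (dvd_of_mem_normalizedFactors hpmem) hpb
    have h2 : (normalizedFactors (C s)).filter (fun p => p ∣ b) = normalizedFactors (C s) := by
      rw [Multiset.filter_eq_self]
      intro p hpmem
      exact hCp s p (prime_of_normalized_factor p hpmem) (dvd_of_mem_normalizedFactors hpmem)
    rw [h1, h2, zero_add]
    have := prod_normalizedFactors hCne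
    have hn : normalize ((normalizedFactors (C s)).prod) = normalize (C s) :=
      normalize_eq_normalize this.dvd this.symm.dvd
    rw [(hCmonic s).normalize_eq_self] at hn
    have hnorm : normalize ((normalizedFactors (C s)).prod) = (normalizedFactors (C s)).prod := by
      apply Multiset.prod_induction (fun x => normalize x = x)
      · intro x y hx hy; rw [normalize_mul x y, hx, hy]
      · exact normalize_one
      · intro x hx
        exact normalize_normalized_factor x hx
    exact hn.symm.trans hnorm
  refine ⟨hkey, ?_, ?_⟩
  · rw [← hkey]
    exact EuclideanDomain.eq_div_of_mul_eq_left hCne (hmul s)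
  · -- gcd (C s) (A s) = 1
    by_contra hne
    have hgne : gcd (C s) (A s) ≠ 0 := gcd_ne_zero_of_left hCne
    have hnu : ¬ IsUnit (gcd (C s) (A s)) := by
      intro hu
      apply hne
      rw [← normalize_gcd, normalize_eq_one]
      exact hu
    obtain ⟨p, hpirr, hpd⟩ := WfDvdMonoid.exists_irreducible_factor hnu hgne
    have hp : Prime p := hpirr.prime
    have hpC : p ∣ C s := hpd.trans (gcd_dvd_left _ _)
    have hpA : p ∣ A s := hpd.trans (gcd_dvd_right _ _)
    exact hcop p hp hpA (hCp s p hp hpC)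
end

section
/- Let k be a field, T ∈ k[x] monic non-constant, and f ∈ k[x] nonzero. Then there exist unique monic polynomials T_1, T_2 ∈ k[x] with T = T_1·T_2, gcd(T_1, T_2) = 1, f invertible modulo T_1 (i.e., gcd(f, T_1) = 1), and f nilpotent modulo T_2 (i.e., sqfp(T_2) divides f) whenever T_2 ≠ 1. Explicitly T_2 = T^{(f)} is the f-component of T and T_1 = T / T^{(f)}. -/
open Polynomial UniqueFactorizationMonoid
open scoped Classical

private lemma monic_of_mem_nf {k : Type*} [Field k] [DecidableEq k] {a p : Polynomial k}
    (hp : p ∈ normalizedFactors a) : p.Monic := by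
  have h0 : p ≠ 0 := (prime_of_normalized_factor p hp).ne_zero
  have := normalize_normalized_factor p hp
  rw [← this]
  exact monic_normalize h0

private lemma finset_prod_primes_dvd {k : Type*} [Field k] [DecidableEq k]
    (s : Finset (Polynomial k)) (f : Polynomial k)
    (hp : ∀ p ∈ s, Prime p ∧ normalize p = p) (hd : ∀ p ∈ s, p ∣ f) :
    s.prod id ∣ f := by
  classical
  induction s using Finset.induction_on with
  | empty => simp
  | @insert a s ha ih =>
    rw [Finset.prod_insert ha]
    have hap := hp a (Finset.mem_insert_self a s)
    have hnd : ¬ a ∣ s.prod id := by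
      intro hdvd
      have : a ∣ s.val.prod := by
        rwa [Finset.prod, Multiset.map_id] at hdvd
      obtain ⟨b, hb, hab⟩ := hap.1.exists_mem_multiset_dvd this
      have hbp := hp b (Finset.mem_insert_of_mem hb)
      have : a = b := by
        have h' := hap.1.associated_of_dvd hbp.1 hab
        have := normalize_eq_normalize h'.dvd h'.symm.dvd
        rwa [hap.2, hbp.2] at this
      exact ha (this ▸ hb)
    have hcop : IsCoprime a (s.prod id) := (hap.1.coprime_iff_not_dvd).mpr hnd
    exact hcop.mul_dvd (hd a (Finset.mem_insert_self a s))
      (ih (fun p hps => hp p (Finset.mem_insert_of_mem hps))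
        (fun p hps => hd p (Finset.mem_insert_of_mem hps)))

/-- **the "invertible/nilpotent" splitting.** Let `T ∈ k[x]` be monic
non-constant and `f ∈ k[x]` nonzero.  There exist unique monic `T₁, T₂` with
`T = T₁·T₂`, `gcd(T₁,T₂) = 1`, `f` invertible modulo `T₁` (i.e. `gcd(f,T₁) = 1`),
and `f` nilpotent modulo `T₂` (i.e. `sqfp(T₂) ∣ f`) whenever `T₂ ≠ 1`.  Explicitly
`T₂ = T^{(f)}` is the `f`-component of `T` and `T₁ = T / T^{(f)}`. -/
theorem invertNil_splitting {k : Type*} [Field k] [DecidableEq k]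
    (T f : Polynomial k) (hT : T.Monic) (hTdeg : 0 < T.natDegree) (hf : f ≠ 0) :
    (∃ T₁ T₂ : Polynomial k,
      T₁.Monic ∧ T₂.Monic ∧ T = T₁ * T₂ ∧ gcd T₁ T₂ = 1 ∧
      gcd f T₁ = 1 ∧ (T₂ ≠ 1 → radical T₂ ∣ f) ∧
      T₂ = bComponent T f ∧ T₁ = T / bComponent T f) ∧
    (∀ T₁ T₂ T₁' T₂' : Polynomial k,
      (T₁.Monic ∧ T₂.Monic ∧ T = T₁ * T₂ ∧ gcd T₁ T₂ = 1 ∧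
        gcd f T₁ = 1 ∧ (T₂ ≠ 1 → radical T₂ ∣ f)) →
      (T₁'.Monic ∧ T₂'.Monic ∧ T = T₁' * T₂' ∧ gcd T₁' T₂' = 1 ∧
        gcd f T₁' = 1 ∧ (T₂' ≠ 1 → radical T₂' ∣ f)) →
      T₁ = T₁' ∧ T₂ = T₂') := by
  classical
  have hT0 : T ≠ 0 := hT.ne_zero
  set S : Multiset (Polynomial k) := normalizedFactors T with hS
  set S₂ : Multiset (Polynomial k) := S.filter (fun p => p ∣ f) with hS₂
  set S₁ : Multiset (Polynomial k) := S.filter (fun p => ¬ p ∣ f) with hS₁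
  set T₂ : Polynomial k := S₂.prod with hT₂
  set T₁ : Polynomial k := S₁.prod with hT₁
  have hbc : bComponent T f = T₂ := rfl
  have hmem₁ : ∀ p ∈ S₁, p ∈ S ∧ ¬ p ∣ f := fun p hp => Multiset.mem_filter.mp hp
  have hmem₂ : ∀ p ∈ S₂, p ∈ S ∧ p ∣ f := fun p hp => Multiset.mem_filter.mp hp
  have hmon₁ : T₁.Monic := by
    have := monic_multiset_prod_of_monic S₁ id (fun p hp => monic_of_mem_nf (hmem₁ p hp).1)
    simpa [Multiset.map_id] using this
  have hmon₂ : T₂.Monic := by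
    have := monic_multiset_prod_of_monic S₂ id (fun p hp => monic_of_mem_nf (hmem₂ p hp).1)
    simpa [Multiset.map_id] using this
  have hSmon : S.prod.Monic := by
    have := monic_multiset_prod_of_monic S id (fun p hp => monic_of_mem_nf hp)
    simpa [Multiset.map_id] using this
  have hSprod : S.prod = T :=
    Polynomial.eq_of_monic_of_associated hSmon hT (prod_normalizedFactors hT0)
  have hmul : T = T₁ * T₂ := by
    have hsum : S₂ + S₁ = S := by
      rw [hS₁, hS₂]
      exact Multiset.filter_add_not _ _
    rw [← hSprod, ← hsum, Multiset.prod_add, mul_comm]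
  have hcop : gcd T₁ T₂ = 1 := by
    have hrel : IsRelPrime T₁ T₂ := by
      intro d hd1 hd2
      by_contra hdu
      have hd0 : d ≠ 0 := by
        rintro rfl
        exact hmon₁.ne_zero (zero_dvd_iff.mp hd1)
      obtain ⟨q, hqirr, hqd⟩ := WfDvdMonoid.exists_irreducible_factor hdu hd0
      have hq : Prime q := hqirr.prime
      obtain ⟨p₁, hp₁, hqp₁⟩ := hq.exists_mem_multiset_dvd (hqd.trans hd1)
      obtain ⟨p₂, hp₂, hqp₂⟩ := hq.exists_mem_multiset_dvd (hqd.trans hd2)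
      have h₁ := hmem₁ p₁ hp₁
      have h₂ := hmem₂ p₂ hp₂
      have e : p₁ = p₂ := by
        have a1 := (hq.associated_of_dvd (prime_of_normalized_factor p₁ h₁.1) hqp₁)
        have a2 := (hq.associated_of_dvd (prime_of_normalized_factor p₂ h₂.1) hqp₂)
        have h' := a1.symm.trans a2
        have := normalize_eq_normalize h'.dvd h'.symm.dvd
        rwa [normalize_normalized_factor p₁ h₁.1, normalize_normalized_factor p₂ h₂.1] at this
      exact h₁.2 (e ▸ h₂.2)
    have hu : IsUnit (gcd T₁ T₂) := gcd_isUnit_iff_isRelPrime.mpr hrel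
    rw [← normalize_gcd T₁ T₂]
    exact normalize_eq_one.mpr hu
  have hgf : gcd f T₁ = 1 := by
    have hrel : IsRelPrime f T₁ := by
      intro d hdf hd1
      by_contra hdu
      have hd0 : d ≠ 0 := by
        rintro rfl
        exact hmon₁.ne_zero (zero_dvd_iff.mp hd1)
      obtain ⟨q, hqirr, hqd⟩ := WfDvdMonoid.exists_irreducible_factor hdu hd0
      have hq : Prime q := hqirr.prime
      obtain ⟨p₁, hp₁, hqp₁⟩ := hq.exists_mem_multiset_dvd (hqd.trans hd1)
      have h₁ := hmem₁ p₁ hp₁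
      have : p₁ ∣ f := by
        have a1 := hq.associated_of_dvd (prime_of_normalized_factor p₁ h₁.1) hqp₁
        exact a1.symm.dvd.trans (hqd.trans hdf)
      exact h₁.2 this
    have hu : IsUnit (gcd f T₁) := gcd_isUnit_iff_isRelPrime.mpr hrel
    rw [← normalize_gcd f T₁]
    exact normalize_eq_one.mpr hu
  have hnf₂ : normalizedFactors T₂ = S₂ := by
    rw [hT₂, normalizedFactors_prod_eq _ (fun p hp => irreducible_of_normalized_factor p (hmem₂ p hp).1)]
    rw [Multiset.map_congr rfl (fun p hp => normalize_normalized_factor p (hmem₂ p hp).1)]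
    exact Multiset.map_id _
  have hrad : T₂ ≠ 1 → radical T₂ ∣ f := by
    intro _
    unfold radical primeFactors
    rw [hnf₂]
    refine finset_prod_primes_dvd _ _ ?_ ?_
    · intro p hp
      have hpS₂ : p ∈ S₂ := by simpa using hp
      exact ⟨prime_of_normalized_factor p (hmem₂ p hpS₂).1,
        normalize_normalized_factor p (hmem₂ p hpS₂).1⟩
    · intro p hp
      have hpS₂ : p ∈ S₂ := by simpa using hp
      exact (hmem₂ p hpS₂).2
  have hdiv : T₁ = T / bComponent T f := by
    rw [hbc, hmul]
    exact (mul_div_cancel_right₀ _ hmon₂.ne_zero).symm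
  -- uniqueness claim
  have key : ∀ U₁ U₂ : Polynomial k,
      (U₁.Monic ∧ U₂.Monic ∧ T = U₁ * U₂ ∧ gcd U₁ U₂ = 1 ∧
        gcd f U₁ = 1 ∧ (U₂ ≠ 1 → radical U₂ ∣ f)) → U₂ = T₂ := by
    rintro U₁ U₂ ⟨hU₁m, hU₂m, hUmul, _, hUgf, hUrad⟩
    have hU₁0 : U₁ ≠ 0 := hU₁m.ne_zero
    have hU₂0 : U₂ ≠ 0 := hU₂m.ne_zero
    have hfilT : S.filter (fun p => p ∣ f) =
        normalizedFactors U₂ := by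
      rw [hS, hUmul, normalizedFactors_mul hU₁0 hU₂0, Multiset.filter_add]
      have e1 : (normalizedFactors U₁).filter (fun p => p ∣ f) = 0 := by
        rw [Multiset.filter_eq_nil]
        intro p hp hpf
        have hpirr := irreducible_of_normalized_factor p hp
        have : p ∣ gcd f U₁ := dvd_gcd hpf (dvd_of_mem_normalizedFactors hp)
        rw [hUgf] at this
        exact hpirr.not_isUnit (isUnit_of_dvd_one this)
      have e2 : (normalizedFactors U₂).filter (fun p => p ∣ f) = normalizedFactors U₂ := by
        rw [Multiset.filter_eq_self]
        intro p hp
        rcases eq_or_ne U₂ 1 with h1 | h1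
        · rw [h1, normalizedFactors_one] at hp
          exact absurd hp (Multiset.notMem_zero p)
        · have hpr : p ∣ radical U₂ := by
            unfold radical primeFactors
            exact Finset.dvd_prod_of_mem id (by simpa [mem_primeFactors] using hp)
          exact hpr.trans (hUrad h1)
      rw [e1, e2, zero_add]
    have : T₂ = (normalizedFactors U₂).prod := by rw [hT₂, hS₂, hfilT]
    rw [this]
    refine (Polynomial.eq_of_monic_of_associated ?_ hU₂m (prod_normalizedFactors hU₂0)).symm
    have := monic_multiset_prod_of_monic (normalizedFactors U₂) id
      (fun p hp => monic_of_mem_nf hp)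
    simpa [Multiset.map_id] using this
  refine ⟨⟨T₁, T₂, hmon₁, hmon₂, hmul, hcop, hgf, hrad, hbc.symm, hdiv⟩, ?_⟩
  rintro U₁ U₂ U₁' U₂' h h'
  have e2 : U₂ = U₂' := (key U₁ U₂ h).trans (key U₁' U₂' h').symm
  refine ⟨?_, e2⟩
  have hU₂0 : U₂ ≠ 0 := h.2.1.ne_zero
  have := h.2.2.1.symm.trans (e2 ▸ h'.2.2.1)
  exact mul_right_cancel₀ hU₂0 this
end

section
/- Let k be a field, T ∈ k[x] monic non-constant, R = k[x]/⟨T⟩, and let F_1, F_2 ∈ k[x][y] with deg_y(F_1) ≥ deg_y(F_2), whose subresultant pseudo-remainder sequence over k[x] is F_1, F_2, …, F_r, F_{r+1} = 0. Suppose the leading coefficients lc(F_1), …, lc(F_i) are all invertible modulo T for some 2 ≤ i ≤ r+1. Then for every 2 ≤ j ≤ i+1, the ideals of k[x][y] satisfy ⟨F_1, F_2, T⟩ = ⟨F_{j−1} mod T, F_j mod T, T⟩. -/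
open Polynomial

lemma prs_exists_mul_eq_one_add {k : Type*} [Field k] (T u : Polynomial k)
    (hu : IsUnit (Ideal.Quotient.mk (Ideal.span {T}) u)) :
    ∃ w s : Polynomial k, u * w = 1 + T * s := by
  obtain ⟨b, hb⟩ := isUnit_iff_exists_inv.mp hu
  obtain ⟨w, rfl⟩ := Ideal.Quotient.mk_surjective b
  have hmem : u * w - 1 ∈ Ideal.span {T} := by
    rw [← Ideal.Quotient.eq_zero_iff_mem, map_sub, map_mul, map_one, hb, sub_self]
  obtain ⟨s, hs⟩ := Ideal.mem_span_singleton.mp hmem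
  exact ⟨w, s, by linear_combination hs⟩

lemma prs_key {k : Type*} [Field k] (T u v : Polynomial k)
    (A B R' Q : Polynomial (Polynomial k))
    (hu : IsUnit (Ideal.Quotient.mk (Ideal.span {T}) u))
    (hv : IsUnit (Ideal.Quotient.mk (Ideal.span {T}) v))
    (h : Polynomial.C u * A = Q * B + Polynomial.C v * R') :
    Ideal.span ({A, B, Polynomial.C T} : Set (Polynomial (Polynomial k))) =
      Ideal.span ({B, R', Polynomial.C T} : Set (Polynomial (Polynomial k))) := by
  obtain ⟨w, s, hw⟩ := prs_exists_mul_eq_one_add T u hu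
  obtain ⟨w', s', hw'⟩ := prs_exists_mul_eq_one_add T v hv
  have hwC : Polynomial.C u * Polynomial.C w
      = 1 + Polynomial.C T * Polynomial.C s := by
    rw [← Polynomial.C_mul, hw]; simp [Polynomial.C_add, Polynomial.C_mul]
  have hw'C : Polynomial.C v * Polynomial.C w'
      = 1 + Polynomial.C T * Polynomial.C s' := by
    rw [← Polynomial.C_mul, hw']; simp [Polynomial.C_add, Polynomial.C_mul]
  apply le_antisymm
  · rw [Ideal.span_le]
    have hB : B ∈ Ideal.span ({B, R', Polynomial.C T} : Set (Polynomial (Polynomial k))) :=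
      Ideal.subset_span (by simp)
    have hR : R' ∈ Ideal.span ({B, R', Polynomial.C T} : Set (Polynomial (Polynomial k))) :=
      Ideal.subset_span (by simp)
    have hT : Polynomial.C T ∈ Ideal.span ({B, R', Polynomial.C T} : Set (Polynomial (Polynomial k))) :=
      Ideal.subset_span (by simp)
    have hA : A ∈ Ideal.span ({B, R', Polynomial.C T} : Set (Polynomial (Polynomial k))) := by
      have hAeq : A = (Polynomial.C w * Q) * B + (Polynomial.C w * Polynomial.C v) * R'
          + (-(Polynomial.C s * A)) * Polynomial.C T := by
        linear_combination Polynomial.C w * h - A * hwC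
      rw [hAeq]
      exact add_mem (add_mem (Ideal.mul_mem_left _ _ hB) (Ideal.mul_mem_left _ _ hR))
        (Ideal.mul_mem_left _ _ hT)
    intro x hx
    simp only [Set.mem_insert_iff, Set.mem_singleton_iff] at hx
    rcases hx with rfl | rfl | rfl
    · exact hA
    · exact hB
    · exact hT
  · rw [Ideal.span_le]
    have hA : A ∈ Ideal.span ({A, B, Polynomial.C T} : Set (Polynomial (Polynomial k))) :=
      Ideal.subset_span (by simp)
    have hB : B ∈ Ideal.span ({A, B, Polynomial.C T} : Set (Polynomial (Polynomial k))) :=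
      Ideal.subset_span (by simp)
    have hT : Polynomial.C T ∈ Ideal.span ({A, B, Polynomial.C T} : Set (Polynomial (Polynomial k))) :=
      Ideal.subset_span (by simp)
    have hR : R' ∈ Ideal.span ({A, B, Polynomial.C T} : Set (Polynomial (Polynomial k))) := by
      have hReq : R' = (Polynomial.C w' * Polynomial.C u) * A + (-(Polynomial.C w' * Q)) * B
          + (-(Polynomial.C s' * R')) * Polynomial.C T := by
        linear_combination (-(Polynomial.C w')) * h - R' * hw'C
      rw [hReq]
      exact add_mem (add_mem (Ideal.mul_mem_left _ _ hA) (Ideal.mul_mem_left _ _ hB))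
        (Ideal.mul_mem_left _ _ hT)
    intro x hx
    simp only [Set.mem_insert_iff, Set.mem_singleton_iff] at hx
    rcases hx with rfl | rfl | rfl
    · exact hB
    · exact hR
    · exact hT

/-- Let `k` be a field, `T ∈ k[x]` monic non-constant, and let
`F₁, F₂ ∈ k[x][y]` with `deg_y F₁ ≥ deg_y F₂`, whose subresultant pseudo-remainder
sequence over `k[x]` is `F₁, F₂, …, F_r, F_{r+1} = 0`.  The p.r.s. is encoded by its
defining relations: `F₃ = (-1)^{n₁-n₂+1} prem(F₁,F₂)` and, for `j ≥ 4`,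
`F_j = prem(F_{j-2},F_{j-1}) / (-lc(F_{j-2})·(-c_j)^{n_{j-2}-n_{j-1}})` with
`c₃ = -1` and `c_j = (lc(F_{j-2})/c_{j-1})^{n_{j-3}-n_{j-2}}·c_{j-1}` (here all the
divisions are recorded in multiplied-out form, and `prem(A,B)` is witnessed through
the pseudo-division identity `lc(B)^{deg A - deg B + 1}·A = Q·B + prem(A,B)` with
`deg prem < deg B`).  If the leading coefficients `lc(F₁), …, lc(F_i)` are all
invertible modulo `T` for some `2 ≤ i ≤ r+1`, then for every `2 ≤ j ≤ i+1` the
ideals of `k[x][y]` satisfy `⟨F₁, F₂, T⟩ = ⟨F_{j-1} mod T, F_j mod T, T⟩`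
(equivalently `⟨F₁, F₂, T⟩ = ⟨F_{j-1}, F_j, T⟩`, since the reductions mod `T`
differ from `F_{j-1}, F_j` by multiples of `T`). -/
theorem prs_ideal_preservation {k : Type*} [Field k]
    (T : Polynomial k) (hT : T.Monic) (hTdeg : 0 < T.natDegree)
    (r : ℕ) (hr : 2 ≤ r)
    (F Q : ℕ → Polynomial (Polynomial k)) (c : ℕ → Polynomial k)
    -- the sequence starts with `F₁, F₂` of non-increasing `y`-degrees
    (hdeg12 : (F 2).natDegree ≤ (F 1).natDegree)
    -- `F₁, …, F_r` are nonzero and `F_{r+1} = 0`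
    (hFne : ∀ j, 1 ≤ j → j ≤ r → F j ≠ 0)
    (hFr1 : F (r + 1) = 0)
    -- initialization of the `c`-sequence and its recursion (in multiplied-out form)
    (hc3 : c 3 = -1)
    (hcrec : ∀ j, 4 ≤ j → j ≤ r + 1 →
      c j * c (j - 1) ^ ((F (j - 3)).natDegree - (F (j - 2)).natDegree) =
        (F (j - 2)).leadingCoeff ^ ((F (j - 3)).natDegree - (F (j - 2)).natDegree) *
          c (j - 1))
    -- the pseudo-division identity defining `F₃`
    (hF3 : Polynomial.C ((F 2).leadingCoeff ^
          ((F 1).natDegree - (F 2).natDegree + 1)) * F 1 =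
        Q 3 * F 2 +
          Polynomial.C ((-1 : Polynomial k) ^
            ((F 1).natDegree - (F 2).natDegree + 1)) * F 3)
    -- the pseudo-division identities defining `F_j` for `4 ≤ j ≤ r+1`
    (hFrec : ∀ j, 4 ≤ j → j ≤ r + 1 →
      Polynomial.C ((F (j - 1)).leadingCoeff ^
          ((F (j - 2)).natDegree - (F (j - 1)).natDegree + 1)) * F (j - 2) =
        Q j * F (j - 1) +
          Polynomial.C (-(F (j - 2)).leadingCoeff *
            (-(c j)) ^ ((F (j - 2)).natDegree - (F (j - 1)).natDegree)) * F j)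
    -- remainders have strictly smaller degree (or vanish)
    (hdegrec : ∀ j, 3 ≤ j → j ≤ r + 1 →
      F j = 0 ∨ (F j).natDegree < (F (j - 1)).natDegree)
    -- the invertibility assumption modulo `T`
    (i : ℕ) (hi2 : 2 ≤ i) (hir : i ≤ r + 1)
    (hinv : ∀ j, 1 ≤ j → j ≤ i →
      IsUnit (Ideal.Quotient.mk (Ideal.span {T}) (F j).leadingCoeff)) :
    ∀ j, 2 ≤ j → j ≤ i + 1 →
      Ideal.span ({F 1, F 2, Polynomial.C T} : Set (Polynomial (Polynomial k))) =
        Ideal.span ({F (j - 1), F j, Polynomial.C T} :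
          Set (Polynomial (Polynomial k))) := by
  classical
  -- the quotient ring k[x]/(T) is nontrivial
  have hTnu : ¬ IsUnit T := Polynomial.not_isUnit_of_natDegree_pos T hTdeg
  have hne_top : Ideal.span ({T} : Set (Polynomial k)) ≠ ⊤ := by
    simpa [Ideal.span_singleton_eq_top] using hTnu
  haveI : Nontrivial (Polynomial k ⧸ Ideal.span ({T} : Set (Polynomial k))) :=
    Ideal.Quotient.nontrivial_iff.mpr hne_top
  -- rule out i = r + 1
  have hir' : i ≤ r := by
    by_contra hcon
    have hieq : i = r + 1 := by omega
    have h0 := hinv (r + 1) (by omega) (by omega)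
    rw [hFr1] at h0
    simp only [Polynomial.leadingCoeff_zero, map_zero] at h0
    exact not_isUnit_zero h0
  -- the c j are invertible mod T for 3 ≤ j ≤ i + 1
  have hcunit : ∀ j, 3 ≤ j → j ≤ i + 1 →
      IsUnit (Ideal.Quotient.mk (Ideal.span {T}) (c j)) := by
    intro j hj3
    induction j, hj3 using Nat.le_induction with
    | base =>
      intro _
      rw [hc3]
      rw [map_neg, map_one]; exact (isUnit_one (M := Polynomial k ⧸ Ideal.span ({T} : Set (Polynomial k)))).neg
    | succ n hn IH =>
      intro hni
      have hrec := hcrec (n + 1) (by omega) (by omega)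
      have hcn : IsUnit (Ideal.Quotient.mk (Ideal.span {T}) (c n)) := IH (by omega)
      have hlc : IsUnit (Ideal.Quotient.mk (Ideal.span {T}) (F (n + 1 - 2)).leadingCoeff) :=
        hinv (n + 1 - 2) (by omega) (by omega)
      have hmk := congrArg (Ideal.Quotient.mk (Ideal.span {T})) hrec
      simp only [map_mul, map_pow, Nat.add_sub_cancel] at hmk
      have hR : IsUnit (Ideal.Quotient.mk (Ideal.span {T})
          ((F (n + 1 - 2)).leadingCoeff) ^ ((F (n + 1 - 3)).natDegree - (F (n + 1 - 2)).natDegree)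
          * Ideal.Quotient.mk (Ideal.span {T}) (c n)) := (hlc.pow _).mul hcn
      rw [← hmk] at hR
      exact isUnit_of_mul_isUnit_left hR
  -- main induction
  intro j hj2
  induction j, hj2 using Nat.le_induction with
  | base => intro _; rfl
  | succ n hn IH =>
    intro hni
    have IH' := IH (by omega)
    have step : Ideal.span ({F (n - 1), F n, Polynomial.C T} :
          Set (Polynomial (Polynomial k))) =
        Ideal.span ({F n, F (n + 1), Polynomial.C T} :
          Set (Polynomial (Polynomial k))) := by
      by_cases hn2 : n = 2
      · subst hn2
        have hu : IsUnit (Ideal.Quotient.mk (Ideal.span {T})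
            ((F 2).leadingCoeff ^ ((F 1).natDegree - (F 2).natDegree + 1))) := by
          simpa [map_pow] using (hinv 2 (by omega) (by omega)).pow
            ((F 1).natDegree - (F 2).natDegree + 1)
        have hv : IsUnit (Ideal.Quotient.mk (Ideal.span {T})
            ((-1 : Polynomial k) ^ ((F 1).natDegree - (F 2).natDegree + 1))) := by
          rw [map_pow, map_neg, map_one]; exact
            ((isUnit_one (M := Polynomial k ⧸ Ideal.span ({T} : Set (Polynomial k)))).neg.pow
              ((F 1).natDegree - (F 2).natDegree + 1))
        exact prs_key T _ _ _ _ _ _ hu hv hF3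
      · have hn3 : 3 ≤ n := by omega
        have hu : IsUnit (Ideal.Quotient.mk (Ideal.span {T})
            ((F n).leadingCoeff ^ ((F (n - 1)).natDegree - (F n).natDegree + 1))) := by
          simpa [map_pow] using (hinv n (by omega) (by omega)).pow
            ((F (n - 1)).natDegree - (F n).natDegree + 1)
        have hv : IsUnit (Ideal.Quotient.mk (Ideal.span {T})
            (-(F (n - 1)).leadingCoeff *
              (-(c (n + 1))) ^ ((F (n - 1)).natDegree - (F n).natDegree))) := by
          have h1 := hinv (n - 1) (by omega) (by omega)
          have h2 := hcunit (n + 1) (by omega) (by omega)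
          rw [map_mul, map_neg, map_pow, map_neg]; exact
            (h1.neg.mul ((h2.neg).pow ((F (n - 1)).natDegree - (F n).natDegree)))
        exact prs_key T _ _ _ _ _ _ hu hv (hFrec (n + 1) (by omega) (by omega))
    calc Ideal.span ({F 1, F 2, Polynomial.C T} : Set (Polynomial (Polynomial k)))
        = Ideal.span ({F (n - 1), F n, Polynomial.C T} : Set (Polynomial (Polynomial k))) := IH'
      _ = _ := step
end

section
/- Let k[x,y] be a polynomial ring over a field k, let (I_ℓ)_{ℓ∈L} be a finite family of ideals of k[x,y], and let g ∈ k[x,y]. For each ℓ let h_ℓ be the monic generator of the elimination ideal I_ℓ ∩ k[x], and assume the h_ℓ are nonzero and pairwise coprime. Then ∏_{ℓ∈L}(I_ℓ + ⟨g⟩) = (∏_{ℓ∈L} I_ℓ) + ⟨g⟩. -/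
open Polynomial

/-- For pairwise comaximal ideals, `∏ (I ℓ + J) = ∏ I ℓ + J`. -/
lemma aux_prod_add {R : Type*} [CommRing R] {ι : Type*} [DecidableEq ι] (s : Finset ι)
    (I : ι → Ideal R) (J : Ideal R)
    (hco : ∀ ℓ ∈ s, ∀ ℓ' ∈ s, ℓ ≠ ℓ' → IsCoprime (I ℓ) (I ℓ')) :
    (∏ ℓ ∈ s, (I ℓ + J)) = (∏ ℓ ∈ s, I ℓ) + J := by
  induction s using Finset.induction_on with
  | empty => simp [Ideal.one_eq_top]
  | @insert a s ha ih =>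
    have IH := ih (fun ℓ hℓ ℓ' hℓ' hne =>
      hco ℓ (Finset.mem_insert_of_mem hℓ) ℓ' (Finset.mem_insert_of_mem hℓ') hne)
    rw [Finset.prod_insert ha, Finset.prod_insert ha, IH]
    set P := ∏ ℓ ∈ s, I ℓ with hP
    have hIa : IsCoprime (I a) P := by
      rw [hP]
      exact IsCoprime.prod_right fun i hi =>
        hco a (Finset.mem_insert_self a s) i (Finset.mem_insert_of_mem hi)
          (fun h => ha (h ▸ hi))
    have hcop2 : IsCoprime (I a + J) (P + J) := by
      rw [Ideal.isCoprime_iff_sup_eq, eq_top_iff, ← hIa.sup_eq]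
      exact sup_le_sup (le_sup_left : I a ≤ I a + J) (le_sup_left : P ≤ P + J)
    apply le_antisymm
    · calc (I a + J) * (P + J) = I a * P + (I a * J + (J * P + J * J)) := by ring
      _ ≤ I a * P + J := by
          refine sup_le le_sup_left (sup_le ?_ (sup_le ?_ ?_))
          · exact Ideal.mul_le_right.trans le_sup_right
          · exact Ideal.mul_le_left.trans le_sup_right
          · exact Ideal.mul_le_right.trans le_sup_right
    · rw [← Ideal.inf_eq_mul_of_isCoprime hcop2]
      refine sup_le (le_inf ?_ ?_) (le_inf ?_ ?_)
      · exact Ideal.mul_le_left.trans le_sup_left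
      · exact Ideal.mul_le_right.trans le_sup_left
      · exact le_sup_right
      · exact le_sup_right

/-- **Appendix Lemma: a Chinese-Remainder-type identity.**
Let `k[x,y] = k[x][y]` over a field `k`, let `(I_ℓ)_{ℓ ∈ L}` be a finite family of
ideals of `k[x,y]` and `g ∈ k[x,y]`.  For each `ℓ` let `h_ℓ` be the monic generator
of the elimination ideal `I_ℓ ∩ k[x]` (the contraction of `I_ℓ` along
`C : k[x] → k[x][y]`), and assume the `h_ℓ` are nonzero and pairwise coprime.  Then
`∏_ℓ (I_ℓ + ⟨g⟩) = (∏_ℓ I_ℓ) + ⟨g⟩`. -/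
theorem prod_add_span_eq {k : Type*} [Field k] {ι : Type*} (L : Finset ι)
    (I : ι → Ideal (Polynomial (Polynomial k)))
    (g : Polynomial (Polynomial k))
    (h : ι → Polynomial k)
    (hmonic : ∀ ℓ ∈ L, (h ℓ).Monic)
    (hgen : ∀ ℓ ∈ L, Ideal.comap (Polynomial.C : Polynomial k →+* Polynomial (Polynomial k))
      (I ℓ) = Ideal.span {h ℓ})
    (hne : ∀ ℓ ∈ L, h ℓ ≠ 0)
    (hcop : ∀ ℓ ∈ L, ∀ ℓ' ∈ L, ℓ ≠ ℓ' → IsCoprime (h ℓ) (h ℓ')) :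
    (∏ ℓ ∈ L, (I ℓ + Ideal.span {g})) = (∏ ℓ ∈ L, I ℓ) + Ideal.span {g} := by
  classical
  apply aux_prod_add
  intro ℓ hℓ ℓ' hℓ' hne'
  have hCmem : ∀ m ∈ L, (Polynomial.C (h m) : Polynomial (Polynomial k)) ∈ I m := by
    intro m hm
    have : h m ∈ Ideal.comap (Polynomial.C : Polynomial k →+* Polynomial (Polynomial k)) (I m) := by
      rw [hgen m hm]
      exact Ideal.mem_span_singleton_self _
    exact this
  obtain ⟨a, b, hab⟩ := hcop ℓ hℓ ℓ' hℓ' hne'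
  rw [Ideal.isCoprime_iff_sup_eq, Ideal.eq_top_iff_one]
  have : (1 : Polynomial (Polynomial k)) =
      Polynomial.C a * Polynomial.C (h ℓ) + Polynomial.C b * Polynomial.C (h ℓ') := by
    rw [← map_mul, ← map_mul, ← map_add, hab, map_one]
  rw [this]
  exact Submodule.add_mem_sup (Ideal.mul_mem_left _ _ (hCmem ℓ hℓ))
    (Ideal.mul_mem_left _ _ (hCmem ℓ' hℓ'))
end
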